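/- arXiv:0905.0207 — 6 statements merged into one kernel-verified Lean document; each statement's English description precedes it below -/
import Mathlib

section
/- There is an absolute constant C > 0 with the following property: for every n ≥ 1, every K ≥ 1, and every direction θ ∈ ℝ, if there exists a point x ∈ ℝ with f_{n,θ}(x) ≥ K (i.e. some point lies in the θ-projections of at least K distinct discs of G_n), then |proj_θ(G_{n·3^n})| ≤ C/K. -/
open MeasureTheory Metric

/-- The center `z_α` of the disc indexed by `α ∈ {-1,0,1}^{n+1}`. -/
noncomputable def sierpZ (n : ℕ) (α : Fin (n + 1) → ℤ) : ℂ :=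
  ∑ k : Fin (n + 1),
    ((3 : ℂ)⁻¹) ^ (k : ℕ) *
      Complex.exp (Complex.I * (Real.pi : ℂ) * (1 / 2 + (2 / 3) * (α k : ℂ)))

/-- The `n`-th disc-approximation of the Sierpinski gasket. -/
noncomputable def sierpG (n : ℕ) : Set ℂ :=
  ⋃ α ∈ {α : Fin (n + 1) → ℤ | ∀ k, α k = -1 ∨ α k = 0 ∨ α k = 1},
    closedBall (sierpZ n α) (((3 : ℝ)⁻¹) ^ n)

/-- The orthogonal projection in direction `θ`. -/
noncomputable def projDir (θ : ℝ) (z : ℂ) : ℝ :=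
  (Complex.exp (-(θ : ℂ) * Complex.I) * z).re

/-- The counting function `f_{n,θ}(x)`: the number of discs of `G_n` whose
θ-projection contains `x`. -/
noncomputable def fCount (n : ℕ) (θ : ℝ) (x : ℝ) : ℕ :=
  Set.ncard {α : Fin (n + 1) → ℤ | (∀ k, α k = -1 ∨ α k = 0 ∨ α k = 1) ∧
    x ∈ projDir θ '' closedBall (sierpZ n α) (((3 : ℝ)⁻¹) ^ n)}

open scoped ENNReal Pointwise

lemma projDir_lip (θ : ℝ) (u v : ℂ) : |projDir θ u - projDir θ v| ≤ dist u v := by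
  have h1 : projDir θ u - projDir θ v = (Complex.exp (-(θ:ℂ) * Complex.I) * (u - v)).re := by
    simp [projDir, mul_sub, Complex.sub_re]
  rw [h1]
  calc |(Complex.exp (-(θ:ℂ) * Complex.I) * (u - v)).re|
      ≤ ‖Complex.exp (-(θ:ℂ) * Complex.I) * (u - v)‖ := Complex.abs_re_le_norm _
  _ = dist u v := by
      rw [norm_mul, Complex.norm_exp]
      simp [Complex.dist_eq]

lemma projDir_abs_le (θ : ℝ) (u : ℂ) : |projDir θ u| ≤ ‖u‖ := by
  have := projDir_lip θ u 0
  simpa [projDir] using this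

lemma projDir_affine (θ : ℝ) (a : ℂ) (c : ℝ) (w : ℂ) :
    projDir θ (a + (c:ℂ) * w) = projDir θ a + c * projDir θ w := by
  simp [projDir, mul_add, Complex.add_re, mul_left_comm, Complex.re_ofReal_mul]

lemma sierpZ_abs_le (n : ℕ) (α : Fin (n+1) → ℤ) : ‖sierpZ n α‖ ≤ 3/2 := by
  calc ‖sierpZ n α‖ ≤ ∑ k : Fin (n+1), ‖((3 : ℂ)⁻¹) ^ (k : ℕ) *
      Complex.exp (Complex.I * (Real.pi : ℂ) * (1 / 2 + (2 / 3) * (α k : ℂ)))‖ :=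
        norm_sum_le _ _
  _ ≤ ∑ k : Fin (n+1), ((3:ℝ)⁻¹) ^ (k:ℕ) := by
      apply Finset.sum_le_sum
      intro k _
      rw [norm_mul, norm_pow, Complex.norm_exp]
      have h1 : ‖(3:ℂ)⁻¹‖ = (3:ℝ)⁻¹ := by
        rw [norm_inv]; norm_num
      have h2 : (Complex.I * (Real.pi : ℂ) * (1 / 2 + (2 / 3) * ((α k : ℤ) : ℂ))).re = 0 := by
        simp [Complex.mul_re, Complex.mul_im]
      rw [h1, h2, Real.exp_zero, mul_one]
  _ ≤ 3/2 := by
      rw [Fin.sum_univ_eq_sum_range (fun k => ((3:ℝ)⁻¹)^k) (n+1)]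
      rw [geom_sum_eq (by norm_num : (3:ℝ)⁻¹ ≠ 1) (n+1)]
      rw [div_le_iff_of_neg (by norm_num : (3:ℝ)⁻¹ - 1 < 0)]
      nlinarith [pow_nonneg (by norm_num : (0:ℝ) ≤ 3⁻¹) (n+1)]

lemma sierpZ_split (n M : ℕ) (γ : Fin ((n+1) + M + 1) → ℤ) :
    sierpZ ((n+1)+M) γ = sierpZ n (fun k => γ (Fin.castAdd (M+1) k)) +
      ((3:ℂ)⁻¹)^(n+1) * sierpZ M (fun k => γ (Fin.natAdd (n+1) k)) := by
  unfold sierpZ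
  refine (Fin.sum_univ_add (f := fun (i : Fin ((n+1)+(M+1))) => ((3 : ℂ)⁻¹) ^ (i : ℕ) *
      Complex.exp (Complex.I * (Real.pi : ℂ) * (1 / 2 + (2 / 3) * (γ i : ℂ))))).trans ?_
  congr 1
  rw [Finset.mul_sum]
  apply Finset.sum_congr rfl
  intro k _
  simp only [Fin.coe_natAdd, pow_add]
  ring

lemma proj_sierpG_subset (θ : ℝ) (m : ℕ) :
    projDir θ '' sierpG m ⊆ Set.Icc (-(5/2) : ℝ) (5/2) := by
  rintro y ⟨w, hw, rfl⟩
  simp only [sierpG, Set.mem_iUnion, Set.mem_setOf_eq] at hw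
  obtain ⟨α, -, hball⟩ := hw
  have hd : dist w (sierpZ m α) ≤ 1 := by
    refine le_trans (mem_closedBall.mp hball) ?_
    calc ((3:ℝ)⁻¹)^m ≤ 1^m := by
          apply pow_le_pow_left₀ (by norm_num) (by norm_num) m
    _ = 1 := one_pow m
  have habs : ‖w‖ ≤ 5/2 := by
    calc ‖w‖ = ‖sierpZ m α + (w - sierpZ m α)‖ := by ring_nf
    _ ≤ ‖sierpZ m α‖ + ‖w - sierpZ m α‖ := norm_add_le _ _
    _ ≤ 3/2 + 1 := by
        refine add_le_add (sierpZ_abs_le m α) ?_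
        rw [← Complex.dist_eq]; exact hd
    _ = 5/2 := by norm_num
  have := projDir_abs_le θ w
  constructor <;> [linarith [abs_le.mp (this.trans habs)]; linarith [(abs_le.mp (this.trans habs)).2]]

lemma vol_proj_le (θ : ℝ) (m : ℕ) : volume (projDir θ '' sierpG m) ≤ ENNReal.ofReal 5 := by
  refine le_trans (measure_mono (proj_sierpG_subset θ m)) ?_
  rw [Real.volume_Icc]
  apply ENNReal.ofReal_le_ofReal
  norm_num

lemma vol_proj_ne_top (θ : ℝ) (m : ℕ) : volume (projDir θ '' sierpG m) ≠ ⊤ :=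
  ne_top_of_le_ne_top ENNReal.ofReal_ne_top (vol_proj_le θ m)

lemma vtoReal_le (θ : ℝ) (m : ℕ) : (volume (projDir θ '' sierpG m)).toReal ≤ 5 := by
  have := vol_proj_le θ m
  calc (volume (projDir θ '' sierpG m)).toReal ≤ (ENNReal.ofReal 5).toReal :=
    ENNReal.toReal_mono ENNReal.ofReal_ne_top this
  _ = 5 := ENNReal.toReal_ofReal (by norm_num)

/-- decomposition inclusion -/
lemma proj_decomp (θ : ℝ) (n M : ℕ) :
    projDir θ '' sierpG ((n+1)+M) ⊆
      ⋃ α ∈ {α : Fin (n + 1) → ℤ | ∀ k, α k = -1 ∨ α k = 0 ∨ α k = 1},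
        (fun y => projDir θ (sierpZ n α) + ((3:ℝ)⁻¹)^(n+1) * y) '' (projDir θ '' sierpG M) := by
  rintro y ⟨w, hw, rfl⟩
  simp only [sierpG, Set.mem_iUnion, Set.mem_setOf_eq] at hw
  obtain ⟨γ, hγ, hball⟩ := hw
  set c : ℝ := ((3:ℝ)⁻¹)^(n+1) with hc
  have hcpos : (0:ℝ) < c := by positivity
  set α : Fin (n+1) → ℤ := fun k => γ (Fin.castAdd (M+1) k) with hα
  set β : Fin (M+1) → ℤ := fun k => γ (Fin.natAdd (n+1) k) with hβ
  have hcast : ((c:ℝ):ℂ) = ((3:ℂ)⁻¹)^(n+1) := by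
    rw [hc]; push_cast; norm_num
  have hc0 : ((c:ℝ):ℂ) ≠ 0 := Complex.ofReal_ne_zero.mpr hcpos.ne'
  set w' : ℂ := ((c:ℝ):ℂ)⁻¹ * (w - sierpZ n α) with hw'
  have hwdec : w = sierpZ n α + (c:ℂ) * w' := by
    rw [hw', mul_inv_cancel_left₀ hc0]
    ring
  have hmemβ : w' ∈ closedBall (sierpZ M β) (((3:ℝ)⁻¹)^M) := by
    rw [mem_closedBall, Complex.dist_eq, hw']
    have hkey : ((c:ℝ):ℂ)⁻¹ * (w - sierpZ n α) - sierpZ M β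
        = ((c:ℝ):ℂ)⁻¹ * (w - sierpZ ((n+1)+M) γ) := by
      rw [sierpZ_split n M γ, ← hα, ← hβ, ← hcast]
      field_simp
      ring
    rw [hkey, norm_mul, norm_inv]
    have h2 : ‖((c:ℝ):ℂ)‖ = c := by
      rw [Complex.norm_of_nonneg hcpos.le]
    rw [h2]
    rw [inv_mul_le_iff₀ hcpos]
    have := mem_closedBall.mp hball
    rw [Complex.dist_eq] at this
    calc ‖w - sierpZ ((n+1)+M) γ‖ ≤ ((3:ℝ)⁻¹)^((n+1)+M) := this
    _ = c * ((3:ℝ)⁻¹)^M := by rw [pow_add]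
  simp only [Set.mem_iUnion, Set.mem_setOf_eq]
  refine ⟨α, fun k => hγ _, projDir θ w', ⟨w', ?_, rfl⟩, ?_⟩
  · simp only [sierpG, Set.mem_iUnion, Set.mem_setOf_eq]
    exact ⟨β, fun k => hγ _, hmemβ⟩
  · rw [hwdec, projDir_affine]
open scoped Classical in
noncomputable def stackAfin (n : ℕ) : Finset (Fin (n+1) → ℤ) :=
  Fintype.piFinset (fun _ => ({-1,0,1} : Finset ℤ))

lemma mem_stackAfin {n : ℕ} {α : Fin (n+1) → ℤ} :
    α ∈ stackAfin n ↔ ∀ k, α k = -1 ∨ α k = 0 ∨ α k = 1 := by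
  simp [stackAfin, Fintype.mem_piFinset]

lemma card_stackAfin (n : ℕ) : (stackAfin n).card = 3^(n+1) := by
  rw [stackAfin, Fintype.card_piFinset]
  have h3 : ({-1,0,1} : Finset ℤ).card = 3 := by decide
  simp [Finset.prod_const, h3]

open scoped Classical in
noncomputable def stackSfin (n : ℕ) (θ x : ℝ) : Finset (Fin (n+1) → ℤ) :=
  (stackAfin n).filter
    (fun α => x ∈ projDir θ '' closedBall (sierpZ n α) (((3:ℝ)⁻¹)^n))

lemma fCount_eq_card (n : ℕ) (θ x : ℝ) : fCount n θ x = (stackSfin n θ x).card := by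
  classical
  rw [fCount, ← Set.ncard_coe_finset]
  congr 1
  ext α
  simp [stackSfin, mem_stackAfin]

lemma stack_step (n M : ℕ) (θ x : ℝ) (K : ℝ) (hK : 0 < K)
    (hstack : K ≤ ((stackSfin n θ x).card : ℝ)) :
    (volume (projDir θ '' sierpG ((n+1)+M))).toReal ≤
      (1 - K * ((3:ℝ)⁻¹)^(n+1)) * (volume (projDir θ '' sierpG M)).toReal
        + 11 * ((3:ℝ)⁻¹)^(n+1) := by
  classical
  set c : ℝ := ((3:ℝ)⁻¹)^(n+1) with hc
  have hcpos : (0:ℝ) < c := by positivity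
  set Q : Set ℝ := projDir θ '' sierpG M with hQ
  set T : (Fin (n+1) → ℤ) → Set ℝ :=
    fun α => (fun y => projDir θ (sierpZ n α) + c * y) '' Q with hT
  have hcov : projDir θ '' sierpG ((n+1)+M) ⊆ ⋃ α ∈ stackAfin n, T α := by
    intro y hy
    have h := proj_decomp θ n M hy
    simp only [Set.mem_iUnion, Set.mem_setOf_eq, exists_prop] at h
    obtain ⟨α, hα, hy'⟩ := h
    simp only [Set.mem_iUnion, exists_prop]
    exact ⟨α, mem_stackAfin.mpr hα, hy'⟩
  have hTvol : ∀ α : Fin (n+1) → ℤ, volume (T α) = ENNReal.ofReal c * volume Q := by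
    intro α
    have himg : T α = projDir θ (sierpZ n α) +ᵥ (c • Q) := by
      ext y
      simp only [hT, Set.mem_image, Set.mem_vadd_set, Set.mem_smul_set, smul_eq_mul,
        vadd_eq_add]
      constructor
      · rintro ⟨q, hq, rfl⟩; exact ⟨c * q, ⟨q, hq, rfl⟩, rfl⟩
      · rintro ⟨z, ⟨q, hq, rfl⟩, rfl⟩; exact ⟨q, hq, rfl⟩
    rw [himg, measure_vadd, Measure.addHaar_smul_of_nonneg volume hcpos.le Q]
    congr 1
    rw [Module.finrank_self, pow_one]
  have hdiam : ∀ α ∈ stackSfin n θ x, T α ⊆ Set.Icc (x - 11*c/2) (x + 11*c/2) := by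
    intro α hα
    rintro y ⟨q, hq, rfl⟩
    have hx : x ∈ projDir θ '' closedBall (sierpZ n α) (((3:ℝ)⁻¹)^n) :=
      (Finset.mem_filter.mp hα).2
    obtain ⟨w, hw, hwx⟩ := hx
    have h1 : |x - projDir θ (sierpZ n α)| ≤ 3 * c := by
      rw [← hwx]
      refine (projDir_lip θ w (sierpZ n α)).trans ?_
      refine (mem_closedBall.mp hw).trans (le_of_eq ?_)
      rw [hc, pow_succ]
      ring
    have h2 : q ∈ Set.Icc (-(5/2):ℝ) (5/2) := proj_sierpG_subset θ M hq
    obtain ⟨h2a, h2b⟩ := h2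
    obtain ⟨h1a, h1b⟩ := abs_le.mp h1
    constructor <;> nlinarith
  have hSsubA : stackSfin n θ x ⊆ stackAfin n := by
    intro a ha
    exact (Finset.mem_filter.mp ha).1
  have hsub : volume (⋃ α ∈ stackSfin n θ x, T α) ≤ ENNReal.ofReal (11 * c) := by
    calc volume (⋃ α ∈ stackSfin n θ x, T α)
        ≤ volume (Set.Icc (x - 11*c/2) (x + 11*c/2)) :=
          measure_mono (Set.iUnion₂_subset hdiam)
    _ ≤ ENNReal.ofReal (11 * c) := by
        rw [Real.volume_Icc]
        apply ENNReal.ofReal_le_ofReal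
        linarith
  have hchain : volume (projDir θ '' sierpG ((n+1)+M)) ≤
      ENNReal.ofReal (11 * c) +
        (((stackAfin n).card - (stackSfin n θ x).card : ℕ) : ℝ≥0∞) *
          (ENNReal.ofReal c * volume Q) := by
    have hsplit : projDir θ '' sierpG ((n+1)+M) ⊆
        (⋃ α ∈ stackSfin n θ x, T α) ∪ (⋃ α ∈ stackAfin n \ stackSfin n θ x, T α) := by
      intro y hy
      obtain ⟨α, hα, hy'⟩ := by
        simpa only [Set.mem_iUnion, exists_prop] using hcov hy
      by_cases hαS : α ∈ stackSfin n θ x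
      · exact Or.inl (Set.mem_biUnion hαS hy')
      · exact Or.inr (Set.mem_biUnion (Finset.mem_sdiff.mpr ⟨hα, hαS⟩) hy')
    refine le_trans (measure_mono hsplit) ?_
    refine le_trans (measure_union_le _ _) ?_
    refine add_le_add hsub ?_
    refine le_trans (measure_biUnion_finset_le _ _) ?_
    have : ∀ α ∈ stackAfin n \ stackSfin n θ x, volume (T α) =
        ENNReal.ofReal c * volume Q := fun α _ => hTvol α
    rw [Finset.sum_congr rfl this, Finset.sum_const, Finset.card_sdiff_of_subset hSsubA, nsmul_eq_mul]
  -- pass to real numbers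
  have hQfin : volume Q ≠ ⊤ := vol_proj_ne_top θ M
  have hrhs_fin : ENNReal.ofReal (11 * c) +
      (((stackAfin n).card - (stackSfin n θ x).card : ℕ) : ℝ≥0∞) *
        (ENNReal.ofReal c * volume Q) ≠ ⊤ := by
    apply ENNReal.add_ne_top.mpr
    constructor
    · exact ENNReal.ofReal_ne_top
    · exact ENNReal.mul_ne_top (ENNReal.natCast_ne_top _)
        (ENNReal.mul_ne_top ENNReal.ofReal_ne_top hQfin)
  have hreal : (volume (projDir θ '' sierpG ((n+1)+M))).toReal ≤
      11 * c + (((stackAfin n).card - (stackSfin n θ x).card : ℕ) : ℝ) *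
        (c * (volume Q).toReal) := by
    refine le_trans (ENNReal.toReal_mono hrhs_fin hchain) (le_of_eq ?_)
    rw [ENNReal.toReal_add ENNReal.ofReal_ne_top
      (ENNReal.mul_ne_top (ENNReal.natCast_ne_top _)
        (ENNReal.mul_ne_top ENNReal.ofReal_ne_top hQfin))]
    rw [ENNReal.toReal_mul, ENNReal.toReal_mul]
    rw [ENNReal.toReal_ofReal (by positivity), ENNReal.toReal_ofReal hcpos.le,
      ENNReal.toReal_natCast]
  refine hreal.trans ?_
  have hcardle : (stackSfin n θ x).card ≤ (stackAfin n).card :=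
    Finset.card_le_card hSsubA
  have hcard : (((stackAfin n).card - (stackSfin n θ x).card : ℕ) : ℝ) ≤ 3^(n+1) - K := by
    rw [Nat.cast_sub hcardle, card_stackAfin]
    push_cast
    linarith
  have hQnn : (0:ℝ) ≤ (volume Q).toReal := ENNReal.toReal_nonneg
  have h3c : (3:ℝ)^(n+1) * c = 1 := by
    rw [hc, ← mul_pow]
    norm_num
  have : (((stackAfin n).card - (stackSfin n θ x).card : ℕ) : ℝ) * (c * (volume Q).toReal)
      ≤ (1 - K * c) * (volume Q).toReal := by
    calc (((stackAfin n).card - (stackSfin n θ x).card : ℕ) : ℝ) * (c * (volume Q).toReal)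
        ≤ ((3:ℝ)^(n+1) - K) * (c * (volume Q).toReal) := by
          apply mul_le_mul_of_nonneg_right hcard (by positivity)
    _ = ((3:ℝ)^(n+1) * c - K * c) * (volume Q).toReal := by ring
    _ = (1 - K * c) * (volume Q).toReal := by rw [h3c]
  linarith

lemma stack_iter (n : ℕ) (θ x K : ℝ) (hK : 1 ≤ K)
    (hstack : K ≤ ((stackSfin n θ x).card : ℝ))
    (hKc : K * ((3:ℝ)⁻¹)^(n+1) ≤ 1) :
    ∀ j r : ℕ, (volume (projDir θ '' sierpG ((n+1)*j + r))).toReal ≤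
      5 * (1 - K * ((3:ℝ)⁻¹)^(n+1))^j + 11/K := by
  have hKpos : (0:ℝ) < K := lt_of_lt_of_le one_pos hK
  set c : ℝ := ((3:ℝ)⁻¹)^(n+1) with hc
  have hcpos : (0:ℝ) < c := by positivity
  have hlnn : (0:ℝ) ≤ 1 - K * c := by linarith
  intro j
  induction j with
  | zero =>
      intro r
      simp only [Nat.mul_zero, Nat.zero_add, pow_zero, mul_one]
      have := vtoReal_le θ r
      have h11 : (0:ℝ) ≤ 11/K := by positivity
      linarith
  | succ j ih =>
      intro r
      have harith : (n+1)*(j+1) + r = (n+1) + ((n+1)*j + r) := by ring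
      rw [harith]
      have hstep := stack_step n ((n+1)*j + r) θ x K hKpos hstack
      rw [← hc] at hstep
      have hprev := ih r
      have hmul : (1 - K*c) * (volume (projDir θ '' sierpG ((n+1)*j + r))).toReal ≤
          (1 - K*c) * (5 * (1 - K*c)^j + 11/K) :=
        mul_le_mul_of_nonneg_left hprev hlnn
      have hexp : (1 - K*c) * (5 * (1 - K*c)^j + 11/K) + 11 * c =
          5 * (1 - K*c)^(j+1) + (11 * (1 - K*c)/K + 11*c) := by
        ring
      have hlast : 11 * (1 - K*c)/K + 11*c = 11/K := by
        field_simp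
        ring
      calc (volume (projDir θ '' sierpG ((n+1) + ((n+1)*j + r)))).toReal
          ≤ (1 - K*c) * (volume (projDir θ '' sierpG ((n+1)*j + r))).toReal + 11 * c := hstep
      _ ≤ (1 - K*c) * (5 * (1 - K*c)^j + 11/K) + 11 * c := by linarith
      _ = 5 * (1 - K*c)^(j+1) + (11 * (1 - K*c)/K + 11*c) := hexp
      _ ≤ 5 * (1 - K*c)^(j+1) + 11/K := le_of_eq (by linarith)

/-- If some point of the line is covered at least `K` times by the θ-projections
of the discs of `G_n`, then the θ-projection of `G_{n·3^n}` has length at most `C/K`. -/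
theorem stacking_gives_small_projection :
    ∃ C > (0 : ℝ), ∀ n : ℕ, 1 ≤ n → ∀ K : ℝ, 1 ≤ K → ∀ θ : ℝ,
      (∃ x : ℝ, K ≤ (fCount n θ x : ℝ)) →
      (volume (projDir θ '' sierpG (n * 3 ^ n))).toReal ≤ C / K := by
  refine ⟨56, by norm_num, ?_⟩
  rintro n hn K hK θ ⟨x, hx⟩
  obtain ⟨m, rfl⟩ : ∃ m, n = m + 1 := ⟨n - 1, (Nat.succ_pred_eq_of_pos hn).symm⟩
  set n := m + 1
  have hKpos : (0:ℝ) < K := lt_of_lt_of_le one_pos hK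
  rw [fCount_eq_card] at hx
  have hcardA : ((stackSfin n θ x).card : ℝ) ≤ 3^(n+1) := by
    have h1 : (stackSfin n θ x).card ≤ (stackAfin n).card :=
      Finset.card_le_card (by classical exact fun a ha => (Finset.mem_filter.mp ha).1)
    rw [card_stackAfin] at h1
    exact_mod_cast h1
  have hK3 : K ≤ 3^(n+1) := hx.trans hcardA
  set c : ℝ := ((3:ℝ)⁻¹)^(n+1) with hc
  have hcpos : (0:ℝ) < c := by positivity
  have h3c : (3:ℝ)^(n+1) * c = 1 := by
    rw [hc, ← mul_pow]; norm_num
  have hKc : K * c ≤ 1 := by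
    calc K * c ≤ 3^(n+1) * c := by apply mul_le_mul_of_nonneg_right hK3 hcpos.le
    _ = 1 := h3c
  -- choose j and r
  set j : ℕ := 3^m with hj
  set r : ℕ := n * 3^n - (n+1) * j with hr
  have hle : (n+1) * j ≤ n * 3^n := by
    calc (n+1) * j = (m+2) * 3^m := by rw [hj]
    _ ≤ (3*(m+1)) * 3^m := Nat.mul_le_mul_right _ (by omega)
    _ = (m+1) * 3^(m+1) := by ring
  have heq : (n+1)*j + r = n * 3^n := by
    rw [hr]
    exact Nat.add_sub_cancel' hle
  have hbound := stack_iter n θ x K hK hx hKc j r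
  rw [heq, ← hc] at hbound
  -- estimate (1 - K*c)^j ≤ 9/K
  have hjc : (j:ℝ) * c = 1/9 := by
    rw [hj, hc]
    push_cast
    rw [inv_pow]
    rw [show m + 1 + 1 = m + 2 from rfl]
    have h9 : (3:ℝ)^(m+2) = 3^m * 9 := by ring
    rw [h9]
    field_simp
  have hjpos : (0:ℝ) < (j:ℝ) := by
    rw [hj]; push_cast; positivity
  set t : ℝ := K * c with htt
  have ht0 : (0:ℝ) < t := by positivity
  have hlnn : (0:ℝ) ≤ 1 - t := by linarith
  have h1 : 1 - t ≤ 1/(1+t) := by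
    rw [le_div_iff₀ (by linarith : (0:ℝ) < 1 + t)]
    nlinarith
  have h2 : (1 - t)^j ≤ (1/(1+t))^j := pow_le_pow_left₀ hlnn h1 j
  have h4 : 1 + (j:ℝ)*t ≤ (1+t)^j := by
    have := one_add_mul_le_pow (a := t) (by linarith) j
    linarith [this]
  have hjt : (0:ℝ) < (j:ℝ)*t := by positivity
  have h5 : (1/(1+t))^j ≤ 1/((j:ℝ)*t) := by
    rw [one_div_pow]
    apply one_div_le_one_div_of_le hjt
    linarith
  have hjtK : (j:ℝ)*t = K/9 := by
    rw [htt]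
    calc (j:ℝ)*(K*c) = ((j:ℝ)*c)*K := by ring
    _ = K/9 := by rw [hjc]; ring
  have hpow : (1 - t)^j ≤ 9/K := by
    calc (1 - t)^j ≤ 1/((j:ℝ)*t) := h2.trans h5
    _ = 9/K := by rw [hjtK]; field_simp
  calc (volume (projDir θ '' sierpG (n * 3 ^ n))).toReal
      ≤ 5 * (1 - K*c)^j + 11/K := hbound
  _ ≤ 5 * (9/K) + 11/K := by
      have : (1 - K*c)^j ≤ 9/K := hpow
      linarith
  _ = 56/K := by field_simp; ring
end

section
/- There is an absolute constant C > 0 such that for every k ≥ 1, every family of unimodular coefficients c_1, …, c_k ∈ ℂ (|c_j| = 1) and real frequencies α_1, …, α_k ∈ ℝ, one has ∫₀¹ |Σ_{j=1}^{k} c_j e^{i α_j y}|² dy ≤ C · k · sup_{t ∈ ℝ} card{ j : α_j ∈ [t, t+1] }. -/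
open MeasureTheory Complex

lemma antider (z : ℂ) (hz : z ≠ 0) :
    ∫ u in (0:ℝ)..1, (1 - (u:ℂ)) * Complex.exp (z * u) =
      (Complex.exp z - 1 - z) / z ^ 2 := by
  have h : ∀ u ∈ Set.uIcc (0:ℝ) 1, HasDerivAt (fun u : ℝ =>
      ((1 - (u:ℂ)) / z + 1 / z ^ 2) * Complex.exp (z * u))
      ((1 - (u:ℂ)) * Complex.exp (z * u)) u := by
    intro u _
    have h1 : HasDerivAt (fun u : ℝ => ((1 - (u:ℂ)) / z + 1 / z ^ 2)) (-1/z) u := by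
      have : HasDerivAt (fun u : ℝ => (u:ℂ)) 1 u := Complex.ofRealCLM.hasDerivAt
      exact (((hasDerivAt_const u (1:ℂ)).sub this).div_const z).add_const (1/z^2) |>.congr_deriv (by simp)
    have h2 : HasDerivAt (fun u : ℝ => Complex.exp (z * u)) (z * Complex.exp (z * u)) u := by
      have : HasDerivAt (fun u : ℝ => z * (u:ℂ)) z u := by
        simpa using (Complex.ofRealCLM.hasDerivAt (x := u)).const_mul z
      simpa [mul_comm] using this.cexp
    have := h1.mul h2
    refine this.congr_deriv ?_
    field_simp
    ring
  have hint : IntervalIntegrable (fun u : ℝ => (1 - (u:ℂ)) * Complex.exp (z * u))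
      volume 0 1 := by
    apply Continuous.intervalIntegrable
    continuity
  rw [intervalIntegral.integral_eq_sub_of_hasDerivAt h hint]
  push_cast
  field_simp
  simp only [mul_zero, Complex.exp_zero]
  ring

lemma ker_eq (β : ℝ) (hβ : β ≠ 0) :
    ∫ u in (-1:ℝ)..1, ((1 - |u| : ℝ) : ℂ) * Complex.exp (Complex.I * β * u) =
      (((2 - 2 * Real.cos β) / β ^ 2 : ℝ) : ℂ) := by
  have hzne : (Complex.I * β) ≠ 0 := by
    simp [Complex.ext_iff, hβ]
  have hcont : ∀ a b : ℝ, IntervalIntegrable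
      (fun u : ℝ => ((1 - |u| : ℝ) : ℂ) * Complex.exp (Complex.I * β * u)) volume a b := by
    intro a b
    apply Continuous.intervalIntegrable
    have : Continuous fun u : ℝ => (1 - |u| : ℝ) := by continuity
    exact (Complex.continuous_ofReal.comp this).mul (by continuity)
  have hsplit : ∫ u in (-1:ℝ)..1, ((1 - |u| : ℝ) : ℂ) * Complex.exp (Complex.I * β * u)
      = (∫ u in (-1:ℝ)..0, ((1 - |u| : ℝ) : ℂ) * Complex.exp (Complex.I * β * u))
      + ∫ u in (0:ℝ)..1, ((1 - |u| : ℝ) : ℂ) * Complex.exp (Complex.I * β * u) := by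
    rw [intervalIntegral.integral_add_adjacent_intervals (hcont _ _) (hcont _ _)]
  have h1 : ∫ u in (0:ℝ)..1, ((1 - |u| : ℝ) : ℂ) * Complex.exp (Complex.I * β * u)
      = (Complex.exp (Complex.I * β) - 1 - Complex.I * β) / (Complex.I * β) ^ 2 := by
    rw [← antider (Complex.I * β) hzne]
    apply intervalIntegral.integral_congr
    intro u hu
    rw [Set.uIcc_of_le (by norm_num)] at hu
    simp only [_root_.abs_of_nonneg hu.1]
    push_cast
    ring_nf
  have h2 : ∫ u in (-1:ℝ)..0, ((1 - |u| : ℝ) : ℂ) * Complex.exp (Complex.I * β * u)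
      = (Complex.exp (-(Complex.I * β)) - 1 + Complex.I * β) / (Complex.I * β) ^ 2 := by
    have := intervalIntegral.integral_comp_neg
      (f := fun u : ℝ => ((1 - |u| : ℝ) : ℂ) * Complex.exp (Complex.I * β * u))
      (a := (0:ℝ)) (b := 1)
    rw [show -(1:ℝ) = -1 by norm_num, show -(0:ℝ) = 0 by norm_num] at this
    rw [← this]
    have h3 : ∫ u in (0:ℝ)..1, ((1 - |(-u)| : ℝ) : ℂ) * Complex.exp (Complex.I * β * (-u:ℝ))
        = ∫ u in (0:ℝ)..1, (1 - (u:ℂ)) * Complex.exp ((-(Complex.I * β)) * u) := by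
      apply intervalIntegral.integral_congr
      intro u hu
      rw [Set.uIcc_of_le (by norm_num)] at hu
      simp only [abs_neg, _root_.abs_of_nonneg hu.1]
      push_cast
      ring_nf
    rw [h3, antider _ (by simpa using hzne)]
    have hsq : (-(Complex.I * β)) ^ 2 = (Complex.I * β) ^ 2 := by ring
    rw [hsq]
    ring
  rw [hsplit, h1, h2]
  have hI : (Complex.I * β) ^ 2 = -(β:ℂ)^2 := by
    rw [mul_pow, Complex.I_sq]; ring
  rw [hI]
  have hcos : Complex.exp (Complex.I * (β:ℂ)) + Complex.exp (-(Complex.I * (β:ℂ)))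
      = 2 * (Real.cos β : ℂ) := by
    rw [Complex.ofReal_cos, Complex.cos]
    ring_nf
  have hb2 : ((β:ℂ))^2 ≠ 0 := by
    simpa using fun h => hβ (by exact_mod_cast h)
  rw [← add_div, Complex.ofReal_div, Complex.ofReal_pow]
  rw [div_eq_div_iff (by simpa using hb2) hb2]
  push_cast at hcos ⊢
  linear_combination ((β:ℂ))^2 * hcos

lemma tent_integral : ∫ u in (-1:ℝ)..1, (1 - |u|) = 1 := by
  have h1 : ∫ u in (-1:ℝ)..0, (1 - |u|) = ∫ u in (-1:ℝ)..0, (1 + u) := by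
    apply intervalIntegral.integral_congr
    intro u hu
    rw [Set.uIcc_of_le (by norm_num)] at hu
    simp [abs_of_nonpos hu.2]
  have h2 : ∫ u in (0:ℝ)..1, (1 - |u|) = ∫ u in (0:ℝ)..1, (1 - u) := by
    apply intervalIntegral.integral_congr
    intro u hu
    rw [Set.uIcc_of_le (by norm_num)] at hu
    simp [_root_.abs_of_nonneg hu.1]
  have hi : ∀ a b : ℝ, IntervalIntegrable (fun u : ℝ => 1 - |u|) volume a b :=
    fun a b => (by continuity : Continuous fun u : ℝ => 1 - |u|).intervalIntegrable a b
  rw [← intervalIntegral.integral_add_adjacent_intervals (hi (-1) 0) (hi 0 1), h1, h2]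
  have e1 : ∫ u in (-1:ℝ)..0, (1 + u) = 1/2 := by
    have h : ∀ u ∈ Set.uIcc (-1:ℝ) 0, HasDerivAt (fun u : ℝ => u + u^2/2) (1 + u) u := by
      intro u _
      simpa using ((hasDerivAt_id' u).fun_add (((hasDerivAt_id' u).fun_pow 2).div_const 2))
    rw [intervalIntegral.integral_eq_sub_of_hasDerivAt h
      ((by continuity : Continuous fun u:ℝ => 1+u).intervalIntegrable _ _)]
    norm_num
  have e2 : ∫ u in (0:ℝ)..1, (1 - u) = 1/2 := by
    have h : ∀ u ∈ Set.uIcc (0:ℝ) 1, HasDerivAt (fun u : ℝ => u - u^2/2) (1 - u) u := by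
      intro u _
      simpa using ((hasDerivAt_id' u).fun_sub (((hasDerivAt_id' u).fun_pow 2).div_const 2))
    rw [intervalIntegral.integral_eq_sub_of_hasDerivAt h
      ((by continuity : Continuous fun u:ℝ => 1-u).intervalIntegrable _ _)]
    norm_num
  rw [e1, e2]
  norm_num

lemma ker_norm_le_one (β : ℝ) :
    ‖∫ u in (-1:ℝ)..1, ((1 - |u| : ℝ) : ℂ) * Complex.exp (Complex.I * β * u)‖ ≤ 1 := by
  calc ‖∫ u in (-1:ℝ)..1, ((1 - |u| : ℝ) : ℂ) * Complex.exp (Complex.I * β * u)‖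
      ≤ ∫ u in (-1:ℝ)..1, ‖((1 - |u| : ℝ) : ℂ) * Complex.exp (Complex.I * β * u)‖ :=
        intervalIntegral.norm_integral_le_integral_norm (by norm_num)
    _ = ∫ u in (-1:ℝ)..1, (1 - |u|) := by
        apply intervalIntegral.integral_congr
        intro u hu
        rw [Set.uIcc_of_le (by norm_num)] at hu
        have h1 : |u| ≤ 1 := abs_le.2 ⟨hu.1, hu.2⟩
        show ‖((1 - |u| : ℝ) : ℂ) * Complex.exp (Complex.I * β * u)‖ = 1 - |u|
        rw [norm_mul, Complex.norm_real, Real.norm_eq_abs,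
          Complex.norm_exp]
        have h2 : (Complex.I * β * u).re = 0 := by simp
        rw [h2, Real.exp_zero, mul_one, _root_.abs_of_nonneg (by linarith : (0:ℝ) ≤ 1 - |u|)]
    _ = 1 := tent_integral

lemma ker_bound (β : ℝ) :
    ‖∫ u in (-1:ℝ)..1, ((1 - |u| : ℝ) : ℂ) * Complex.exp (Complex.I * β * u)‖
      ≤ 24 * ((1:ℝ)/(⌊|β|⌋₊+1) - 1/(⌊|β|⌋₊+2)) := by
  set n := ⌊|β|⌋₊ with hn
  rcases Nat.eq_zero_or_pos n with h0 | hpos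
  · rw [h0]
    calc _ ≤ (1:ℝ) := ker_norm_le_one β
      _ ≤ _ := by norm_num
  · have hβn : (n : ℝ) ≤ |β| := Nat.floor_le (abs_nonneg β)
    have hn1 : (1:ℝ) ≤ (n:ℝ) := by exact_mod_cast hpos
    have hβ : β ≠ 0 := by
      intro h; rw [h] at hβn; simp at hβn; linarith
    rw [ker_eq β hβ]
    have hcos : Real.cos β ≤ 1 := Real.cos_le_one β
    have hcos2 : -1 ≤ Real.cos β := Real.neg_one_le_cos β
    have hb2 : (0:ℝ) < β ^ 2 := by positivity
    have h1 : ‖(((2 - 2 * Real.cos β) / β ^ 2 : ℝ) : ℂ)‖ = (2 - 2 * Real.cos β) / β ^ 2 := by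
      rw [Complex.norm_real, Real.norm_eq_abs, _root_.abs_of_nonneg]
      apply div_nonneg (by linarith) (by positivity)
    rw [h1]
    have h2 : (2 - 2 * Real.cos β) / β ^ 2 ≤ 4 / (n:ℝ)^2 := by
      apply div_le_div₀ (by norm_num) (by linarith) (by positivity)
      nlinarith [_root_.sq_abs β]
    calc (2 - 2 * Real.cos β) / β ^ 2 ≤ 4 / (n:ℝ)^2 := h2
      _ ≤ 24 * ((1:ℝ)/(n+1) - 1/(n+2)) := by
        have e : (1:ℝ)/(n+1) - 1/(n+2) = 1/((n+1)*(n+2)) := by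
          field_simp
          ring
        rw [e, mul_one_div, div_le_div_iff₀ (by positivity) (by positivity)]
        nlinarith

lemma count_bound {k D : ℕ} (α : Fin k → ℝ)
    (hD : ∀ t : ℝ, Set.ncard {j : Fin k | α j ∈ Set.Icc t (t + 1)} ≤ D)
    (j : Fin k) (n : ℕ) :
    (Finset.univ.filter (fun l : Fin k => ⌊|α j - α l|⌋₊ = n)).card ≤ 2 * D := by
  classical
  set A := Finset.univ.filter (fun l : Fin k =>
    α l ∈ Set.Icc (α j - (n+1)) (α j - (n+1) + 1)) with hA
  set B := Finset.univ.filter (fun l : Fin k =>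
    α l ∈ Set.Icc (α j + n) (α j + n + 1)) with hB
  have hsub : Finset.univ.filter (fun l : Fin k => ⌊|α j - α l|⌋₊ = n) ⊆ A ∪ B := by
    intro l hl
    rw [Finset.mem_filter] at hl
    have hfl := hl.2
    have h1 : (n : ℝ) ≤ |α j - α l| ∧ |α j - α l| < n + 1 := by
      rw [← hfl]
      exact ⟨Nat.floor_le (abs_nonneg _), Nat.lt_floor_add_one _⟩
    rcases le_total (α l) (α j) with hle | hle
    · apply Finset.mem_union_left
      rw [hA, Finset.mem_filter]
      refine ⟨Finset.mem_univ _, ?_, ?_⟩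
      · have : |α j - α l| = α j - α l := _root_.abs_of_nonneg (by linarith)
        rw [this] at h1
        linarith [h1.2]
      · have : |α j - α l| = α j - α l := _root_.abs_of_nonneg (by linarith)
        rw [this] at h1
        linarith [h1.1]
    · apply Finset.mem_union_right
      rw [hB, Finset.mem_filter]
      have : |α j - α l| = α l - α j := by
        rw [abs_sub_comm]
        exact _root_.abs_of_nonneg (by linarith)
      rw [this] at h1
      exact ⟨Finset.mem_univ _, by linarith [h1.1], by linarith [h1.2]⟩
  have hAcard : A.card ≤ D := by
    have := hD (α j - (n+1))
    have he : {l : Fin k | α l ∈ Set.Icc (α j - (n+1)) (α j - (n+1) + 1)} = (A : Set (Fin k)) := by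
      ext l; simp [hA]
    rw [he, Set.ncard_coe_finset] at this
    exact this
  have hBcard : B.card ≤ D := by
    have := hD (α j + n)
    have he : {l : Fin k | α l ∈ Set.Icc (α j + n) (α j + n + 1)} = (B : Set (Fin k)) := by
      ext l; simp [hB]
    rw [he, Set.ncard_coe_finset] at this
    exact this
  calc (Finset.univ.filter (fun l : Fin k => ⌊|α j - α l|⌋₊ = n)).card
      ≤ (A ∪ B).card := Finset.card_le_card hsub
    _ ≤ A.card + B.card := Finset.card_union_le A B
    _ ≤ 2 * D := by omega

lemma row_bound {k D : ℕ} (α : Fin k → ℝ)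
    (hD : ∀ t : ℝ, Set.ncard {j : Fin k | α j ∈ Set.Icc t (t + 1)} ≤ D)
    (j : Fin k) :
    ∑ l : Fin k, 24 * ((1:ℝ)/(⌊|α j - α l|⌋₊+1) - 1/(⌊|α j - α l|⌋₊+2)) ≤ 48 * D := by
  classical
  set key : Fin k → ℕ := fun l => ⌊|α j - α l|⌋₊ with hkey
  set N := (Finset.univ.sup key) + 1 with hN
  set f : ℕ → ℝ := fun n => 24 * ((1:ℝ)/(n+1) - 1/(n+2)) with hf
  have hfnonneg : ∀ n : ℕ, 0 ≤ f n := by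
    intro n
    have h1 : (0:ℝ) < (n:ℝ) + 1 := by positivity
    have h2 : (0:ℝ) < (n:ℝ) + 2 := by positivity
    have : (1:ℝ)/(n+2) ≤ 1/(n+1) := by
      apply div_le_div_of_nonneg_left (by norm_num) h1 (by linarith)
    simp only [hf]
    nlinarith
  have hmaps : ∀ l ∈ Finset.univ, key l ∈ Finset.range N := by
    intro l _
    rw [Finset.mem_range, hN]
    exact Nat.lt_succ_of_le (Finset.le_sup (Finset.mem_univ l))
  have hgrp := Finset.sum_fiberwise_of_maps_to hmaps (fun l => f (key l))
  calc ∑ l : Fin k, 24 * ((1:ℝ)/(⌊|α j - α l|⌋₊+1) - 1/(⌊|α j - α l|⌋₊+2))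
      = ∑ l : Fin k, f (key l) := by rfl
    _ = ∑ n ∈ Finset.range N, ∑ l ∈ Finset.univ.filter (fun l => key l = n), f (key l) :=
        hgrp.symm
    _ ≤ ∑ n ∈ Finset.range N, (2 * D : ℝ) * f n := by
        apply Finset.sum_le_sum
        intro n _
        have he : ∑ l ∈ Finset.univ.filter (fun l => key l = n), f (key l)
            = ∑ l ∈ Finset.univ.filter (fun l => key l = n), f n := by
          apply Finset.sum_congr rfl
          intro l hl
          rw [Finset.mem_filter] at hl
          rw [hl.2]
        rw [he, Finset.sum_const, nsmul_eq_mul]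
        apply mul_le_mul_of_nonneg_right _ (hfnonneg n)
        have := count_bound α hD j n
        exact_mod_cast this
    _ = (2 * D : ℝ) * ∑ n ∈ Finset.range N, f n := by rw [Finset.mul_sum]
    _ ≤ (2 * D : ℝ) * 24 := by
        apply mul_le_mul_of_nonneg_left _ (by positivity)
        have htel : ∑ n ∈ Finset.range N, ((1:ℝ)/(n+1) - 1/(n+2))
            = 1 - 1/(N+1) := by
          have := Finset.sum_range_sub' (f := fun n : ℕ => (1:ℝ)/(n+1)) N
          convert this using 2 with n
          · push_cast; ring_nf
          · norm_num
        have : ∑ n ∈ Finset.range N, f n = 24 * (1 - 1/(N+1)) := by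
          rw [hf, ← Finset.mul_sum, htel]
        rw [this]
        have : (0:ℝ) ≤ 1/(N+1) := by positivity
        nlinarith
    _ ≤ 48 * D := by nlinarith [Nat.cast_nonneg (α := ℝ) D]

lemma interval_integral_re (f : ℝ → ℂ) (a b : ℝ) (hf : IntervalIntegrable f volume a b) :
    ∫ u in a..b, (f u).re = (∫ u in a..b, f u).re := by
  simp only [intervalIntegral, Complex.sub_re]
  have h1 := integral_re (μ := volume.restrict (Set.Ioc a b)) hf.1
  have h2 := integral_re (μ := volume.restrict (Set.Ioc b a)) hf.2
  simp only [RCLike.re_to_complex] at h1 h2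
  rw [h1, h2]

lemma tent_L2 {k D : ℕ} (c : Fin k → ℂ) (hc : ∀ j, ‖c j‖ = 1)
    (α : Fin k → ℝ)
    (hD : ∀ t : ℝ, Set.ncard {j : Fin k | α j ∈ Set.Icc t (t + 1)} ≤ D) :
    ∫ u in (-1:ℝ)..1, (1 - |u|) *
        ‖∑ j, c j * Complex.exp (Complex.I * (α j : ℂ) * (u : ℂ))‖ ^ 2
      ≤ 48 * (k:ℝ) * D := by
  classical
  set S : ℝ → ℂ := fun u => ∑ j, c j * Complex.exp (Complex.I * (α j : ℂ) * (u : ℂ)) with hS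
  have hScont : Continuous S := by
    apply continuous_finset_sum
    intro j _
    exact continuous_const.mul (Complex.continuous_exp.comp
      (continuous_const.mul Complex.continuous_ofReal))
  set F : ℝ → ℂ := fun u => ((1 - |u| : ℝ) : ℂ) * (S u * (starRingEnd ℂ) (S u)) with hF
  have hFcont : Continuous F := by
    apply Continuous.mul
    · exact Complex.continuous_ofReal.comp (continuous_const.sub continuous_abs)
    · exact hScont.mul (Complex.continuous_conj.comp hScont)
  have hpt : ∀ u : ℝ, (1 - |u|) * ‖S u‖ ^ 2 = (F u).re := by
    intro u
    rw [hF]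
    simp only [Complex.mul_conj, Complex.normSq_eq_norm_sq]
    rw [← Complex.ofReal_mul, Complex.ofReal_re]
  have hgoal1 : ∫ u in (-1:ℝ)..1, (1 - |u|) * ‖S u‖ ^ 2
      = (∫ u in (-1:ℝ)..1, F u).re := by
    rw [← interval_integral_re F _ _ (hFcont.intervalIntegrable _ _)]
    congr 1
    ext u
    exact hpt u
  show ∫ u in (-1:ℝ)..1, (1 - |u|) * ‖S u‖ ^ 2 ≤ 48 * (k:ℝ) * D
  rw [hgoal1]
  set T : ℝ → ℂ := fun β => ∫ u in (-1:ℝ)..1, ((1 - |u| : ℝ) : ℂ) *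
    Complex.exp (Complex.I * (β : ℂ) * (u : ℂ)) with hT
  have hFpt : ∀ u : ℝ, F u = ∑ j, ∑ l, (c j * (starRingEnd ℂ) (c l)) *
      (((1 - |u| : ℝ) : ℂ) * Complex.exp (Complex.I * ((α j - α l : ℝ) : ℂ) * (u : ℂ))) := by
    intro u
    have hconj : ∀ l : Fin k, (starRingEnd ℂ) (Complex.exp (Complex.I * (α l : ℂ) * u))
        = Complex.exp (-(Complex.I * (α l : ℂ) * u)) := by
      intro l
      rw [← Complex.exp_conj]
      congr 1
      simp [map_mul, Complex.conj_I, Complex.conj_ofReal]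
    show ((1 - |u| : ℝ) : ℂ) * (S u * (starRingEnd ℂ) (S u)) = _
    rw [hS]
    simp only [map_sum, map_mul, hconj]
    rw [Finset.sum_mul_sum, Finset.mul_sum]
    apply Finset.sum_congr rfl
    intro j _
    rw [Finset.mul_sum]
    apply Finset.sum_congr rfl
    intro l _
    have hexp : Complex.exp (Complex.I * ((α j - α l : ℝ) : ℂ) * u)
        = Complex.exp (Complex.I * (α j : ℂ) * u) * Complex.exp (-(Complex.I * (α l : ℂ) * u)) := by
      rw [← Complex.exp_add]
      congr 1
      push_cast
      ring
    rw [hexp]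
    ring
  have hexpand : (∫ u in (-1:ℝ)..1, F u)
      = ∑ j, ∑ l, (c j * (starRingEnd ℂ) (c l)) * T (α j - α l) := by
    have hcont2 : ∀ (j l : Fin k), Continuous (fun u : ℝ => (c j * (starRingEnd ℂ) (c l)) *
        (((1 - |u| : ℝ) : ℂ) * Complex.exp (Complex.I * ((α j - α l : ℝ) : ℂ) * (u : ℂ)))) := by
      intro j l
      fun_prop
    rw [intervalIntegral.integral_congr (g := fun u => ∑ j, ∑ l,
        (c j * (starRingEnd ℂ) (c l)) *
        (((1 - |u| : ℝ) : ℂ) * Complex.exp (Complex.I * ((α j - α l : ℝ) : ℂ) * (u : ℂ))))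
        (fun u _ => hFpt u)]
    rw [intervalIntegral.integral_finset_sum (fun j _ =>
      (continuous_finset_sum _ (fun l _ => hcont2 j l)).intervalIntegrable _ _)]
    apply Finset.sum_congr rfl
    intro j _
    rw [intervalIntegral.integral_finset_sum (fun l _ => (hcont2 j l).intervalIntegrable _ _)]
    apply Finset.sum_congr rfl
    intro l _
    rw [intervalIntegral.integral_const_mul]
  rw [hexpand]
  have habs : ∀ j l : Fin k, ‖(c j * (starRingEnd ℂ) (c l)) * T (α j - α l)‖
      ≤ 24 * ((1:ℝ)/(⌊|α j - α l|⌋₊+1) - 1/(⌊|α j - α l|⌋₊+2)) := by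
    intro j l
    rw [norm_mul, norm_mul, RCLike.norm_conj]
    rw [hc j, hc l, one_mul, one_mul]
    exact ker_bound (α j - α l)
  calc (∑ j, ∑ l, (c j * (starRingEnd ℂ) (c l)) * T (α j - α l)).re
      ≤ ‖∑ j, ∑ l, (c j * (starRingEnd ℂ) (c l)) * T (α j - α l)‖ := Complex.re_le_norm _
    _ ≤ ∑ j, ‖∑ l, (c j * (starRingEnd ℂ) (c l)) * T (α j - α l)‖ := norm_sum_le _ _
    _ ≤ ∑ j, ∑ l, ‖(c j * (starRingEnd ℂ) (c l)) * T (α j - α l)‖ :=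
        Finset.sum_le_sum (fun j _ => norm_sum_le _ _)
    _ ≤ ∑ j, ∑ l : Fin k, 24 * ((1:ℝ)/(⌊|α j - α l|⌋₊+1) - 1/(⌊|α j - α l|⌋₊+2)) :=
        Finset.sum_le_sum (fun j _ => Finset.sum_le_sum (fun l _ => habs j l))
    _ ≤ ∑ j : Fin k, (48 * D : ℝ) :=
        Finset.sum_le_sum (fun j _ => row_bound α hD j)
    _ = 48 * (k:ℝ) * D := by
        rw [Finset.sum_const, Finset.card_univ, Fintype.card_fin, nsmul_eq_mul]
        ring

/-- A corollary of the Carleson embedding theorem: the `L²([0,1])` norm squared of an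
exponential sum with unimodular coefficients is controlled by `k` times the maximal
number of frequencies in a unit interval. -/
theorem exp_sum_L2_bound :
    ∃ C > (0 : ℝ), ∀ k : ℕ, 1 ≤ k → ∀ c : Fin k → ℂ, (∀ j, ‖c j‖ = 1) →
      ∀ α : Fin k → ℝ, ∀ D : ℕ,
        (∀ t : ℝ, Set.ncard {j : Fin k | α j ∈ Set.Icc t (t + 1)} ≤ D) →
        ∫ y in (0 : ℝ)..1,
            ‖∑ j, c j * Complex.exp (Complex.I * (α j : ℂ) * (y : ℂ))‖ ^ 2
          ≤ C * k * D := by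
  refine ⟨96, by norm_num, ?_⟩
  intro k hk c hc α D hD
  classical
  set c' : Fin k → ℂ := fun j => c j * Complex.exp (Complex.I * (α j : ℂ) * ((1/2 : ℝ) : ℂ))
    with hc'def
  have hc' : ∀ j, ‖c' j‖ = 1 := by
    intro j
    rw [hc'def]
    simp only [norm_mul, hc j, one_mul, Complex.norm_exp]
    have : (Complex.I * (α j : ℂ) * ((1/2 : ℝ) : ℂ)).re = 0 := by simp
    rw [this, Real.exp_zero]
  set h : ℝ → ℝ := fun u =>
    ‖∑ j, c' j * Complex.exp (Complex.I * (α j : ℂ) * (u : ℂ))‖ ^ 2 with hh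
  have hhcont : Continuous h := by
    apply Continuous.pow
    apply continuous_norm.comp
    apply continuous_finset_sum
    intro j _
    fun_prop
  have hhnonneg : ∀ u, 0 ≤ h u := fun u => sq_nonneg _
  -- step 1+2 : change of variables
  have step1 : ∫ y in (0:ℝ)..1,
      ‖∑ j, c j * Complex.exp (Complex.I * (α j : ℂ) * (y : ℂ))‖ ^ 2
      = ∫ u in (-(1/2):ℝ)..(1/2), h u := by
    have hcv := intervalIntegral.integral_comp_add_right (a := (-(1/2):ℝ)) (b := (1/2:ℝ))
      (f := fun y : ℝ => ‖
        ∑ j, c j * Complex.exp (Complex.I * (α j : ℂ) * (y : ℂ))‖ ^ 2) (1/2 : ℝ)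
    norm_num at hcv
    rw [← hcv]
    apply intervalIntegral.integral_congr
    intro u _
    have key : ∀ j : Fin k, c j * Complex.exp (Complex.I * (α j : ℂ) * ((u : ℂ) + 1/2))
        = c' j * Complex.exp (Complex.I * (α j : ℂ) * (u : ℂ)) := by
      intro j
      rw [hc'def]
      have he : Complex.exp (Complex.I * (α j : ℂ) * ((u:ℂ) + 1/2))
          = Complex.exp (Complex.I * (α j : ℂ) * ((1/2 : ℝ) : ℂ)) *
            Complex.exp (Complex.I * (α j : ℂ) * (u : ℂ)) := by
        rw [← Complex.exp_add]
        congr 1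
        push_cast
        ring
      rw [he]
      ring
    show ‖∑ j, c j * Complex.exp (Complex.I * (α j : ℂ) * ((u:ℂ) + 1/2))‖ ^ 2 = h u
    simp only [key]
    rfl
  rw [step1]
  -- step 3 : tent majorization
  have hint : ∀ a b : ℝ, IntervalIntegrable (fun u => 2 * ((1 - |u|) * h u)) volume a b := by
    intro a b
    exact ((continuous_const.mul ((continuous_const.sub _root_.continuous_abs).mul
      hhcont))).intervalIntegrable a b
  have stepA : ∫ u in (-(1/2):ℝ)..(1/2), h u ≤
      ∫ u in (-(1/2):ℝ)..(1/2), 2 * ((1 - |u|) * h u) := by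
    apply intervalIntegral.integral_mono_on (by norm_num)
      (hhcont.intervalIntegrable _ _) (hint _ _)
    intro u hu
    rw [Set.mem_Icc] at hu
    have habs : |u| ≤ 1/2 := abs_le.2 ⟨hu.1, hu.2⟩
    nlinarith [hhnonneg u]
  have stepB : ∫ u in (-(1/2):ℝ)..(1/2), 2 * ((1 - |u|) * h u) ≤
      ∫ u in (-1:ℝ)..1, 2 * ((1 - |u|) * h u) := by
    have hnn : ∀ a b : ℝ, -1 ≤ a → b ≤ 1 → a ≤ b →
        0 ≤ ∫ u in a..b, 2 * ((1 - |u|) * h u) := by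
      intro a b ha hb hab
      apply intervalIntegral.integral_nonneg hab
      intro u hu
      have h1 : |u| ≤ 1 := by
        rw [abs_le]
        exact ⟨by linarith [hu.1], by linarith [hu.2]⟩
      have := hhnonneg u
      nlinarith
    rw [← intervalIntegral.integral_add_adjacent_intervals (a := (-1:ℝ)) (b := (-(1/2):ℝ))
      (c := (1:ℝ)) (hint _ _) (hint _ _),
      ← intervalIntegral.integral_add_adjacent_intervals (a := (-(1/2):ℝ)) (b := ((1/2):ℝ))
      (c := (1:ℝ)) (hint _ _) (hint _ _)]
    have h1 := hnn (-1) (-(1/2)) (by norm_num) (by norm_num) (by norm_num)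
    have h2 := hnn (1/2) 1 (by norm_num) (by norm_num) (by norm_num)
    linarith
  have stepC : ∫ u in (-1:ℝ)..1, 2 * ((1 - |u|) * h u)
      = 2 * ∫ u in (-1:ℝ)..1, (1 - |u|) * h u := intervalIntegral.integral_const_mul 2 _
  have stepD : ∫ u in (-1:ℝ)..1, (1 - |u|) * h u ≤ 48 * (k:ℝ) * D := tent_L2 c' hc' α hD
  calc ∫ u in (-(1/2):ℝ)..(1/2), h u
      ≤ ∫ u in (-(1/2):ℝ)..(1/2), 2 * ((1 - |u|) * h u) := stepA
    _ ≤ ∫ u in (-1:ℝ)..1, 2 * ((1 - |u|) * h u) := stepB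
    _ = 2 * ∫ u in (-1:ℝ)..1, (1 - |u|) * h u := stepC
    _ ≤ 2 * (48 * (k:ℝ) * D) := by linarith
    _ = 96 * (k:ℝ) * D := by ring
end

section
/- Let φ be holomorphic on an open neighborhood of the closed unit disc D ⊆ ℂ, with |φ(0)| ≥ 1, and let C := sup_{z ∈ D} |φ(z)|. Then the number M of zeros of φ in the closed disc of radius 1/2 centered at 0, counted with multiplicity, satisfies M ≤ log₂ C. -/
open Metric

/-- Blaschke-type estimate: if `φ` is holomorphic on a neighborhood of the closed unit
disc, `|φ(0)| ≥ 1`, and `|φ| ≤ C` on the disc, then the number `M` of zeros of `φ` in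
the closed disc of radius `1/2` (counted with multiplicity, encoded by the
factorization `φ(z) = ∏ (z − λ_k) · g(z)` with `g` holomorphic and nonvanishing on the
half-disc and all `λ_k` in the half-disc) satisfies `M ≤ log₂ C`. -/
theorem blaschke_zero_count
    (φ g : ℂ → ℂ) (U : Set ℂ) (hU : IsOpen U) (hDU : closedBall (0 : ℂ) 1 ⊆ U)
    (hφ : DifferentiableOn ℂ φ U) (h0 : 1 ≤ ‖φ 0‖)
    (C : ℝ) (hC : ∀ z ∈ closedBall (0 : ℂ) 1, ‖φ z‖ ≤ C)
    (M : ℕ) (lam : Fin M → ℂ) (hlam : ∀ k, lam k ∈ closedBall (0 : ℂ) (1 / 2))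
    (hg : DifferentiableOn ℂ g U)
    (hgz : ∀ z ∈ closedBall (0 : ℂ) (1 / 2), g z ≠ 0)
    (hfac : ∀ z ∈ U, φ z = (∏ k, (z - lam k)) * g z) :
    (M : ℝ) ≤ Real.logb 2 C := by
  set F : ℂ → ℂ := fun z => g z * ∏ k, (1 - (starRingEnd ℂ) (lam k) * z) with hF
  -- F is differentiable on the closed unit ball
  have hFdiff : DifferentiableOn ℂ F (closedBall (0 : ℂ) 1) := by
    apply DifferentiableOn.mul (hg.mono hDU)
    exact (DifferentiableOn.fun_finset_prod (fun k _ =>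
      ((differentiableOn_const _).sub ((differentiableOn_const _).mul differentiableOn_id))))
  -- boundary bound : on the unit sphere, |F z| = |φ z| ≤ C
  have hbound : ∀ z ∈ sphere (0 : ℂ) 1, ‖F z‖ ≤ C := by
    intro z hz
    have hz1 : ‖z‖ = 1 := by simpa using hz
    have hkey : ∀ k : Fin M, ‖1 - (starRingEnd ℂ) (lam k) * z‖
        = ‖z - lam k‖ := by
      intro k
      have : (1 : ℂ) - (starRingEnd ℂ) (lam k) * z
          = z * (starRingEnd ℂ) (z - lam k) := by
        have hzz : z * (starRingEnd ℂ) z = 1 := by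
          rw [Complex.mul_conj, ← Complex.sq_norm, hz1]
          norm_num
        rw [map_sub, mul_sub, hzz]
        ring
      rw [this, norm_mul, Complex.norm_conj, hz1, one_mul]
    have hmem : z ∈ closedBall (0 : ℂ) 1 :=
      sphere_subset_closedBall hz
    have hφz := hfac z (hDU hmem)
    have : ‖F z‖ = ‖φ z‖ := by
      rw [hφz, hF, norm_mul, norm_mul, norm_prod, norm_prod]
      simp only [hkey]
      ring
    rw [this]
    exact hC z hmem
  -- maximum modulus
  have h0mem : (0 : ℂ) ∈ closure (ball (0 : ℂ) 1) := by
    rw [closure_ball (0 : ℂ) one_ne_zero]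
    simp
  have hmax : ‖F 0‖ ≤ C := by
    apply Complex.norm_le_of_forall_mem_frontier_norm_le isBounded_ball
      (DifferentiableOn.diffContOnCl ?_) ?_ h0mem
    · rw [closure_ball (0 : ℂ) one_ne_zero]; exact hFdiff
    · intro z hz
      rw [frontier_ball (0 : ℂ) one_ne_zero] at hz
      exact hbound z hz
  have hF0 : F 0 = g 0 := by simp [hF]
  rw [hF0] at hmax
  -- lower bound: 2^M ≤ |g 0|
  have h0U : (0 : ℂ) ∈ U := hDU (by simp)
  have hfac0 := hfac 0 h0U
  have hprod : ‖∏ k, ((0 : ℂ) - lam k)‖ ≤ (1 / 2) ^ M := by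
    rw [norm_prod]
    calc ∏ k, ‖0 - lam k‖ ≤ ∏ _k : Fin M, (1 / 2 : ℝ) := by
          apply Finset.prod_le_prod (fun k _ => norm_nonneg _)
          intro k _
          have := hlam k
          simpa [Complex.dist_eq] using this
      _ = (1 / 2) ^ M := by simp
  have hg0 : (2 : ℝ) ^ M ≤ ‖g 0‖ := by
    have h1 : (1 : ℝ) ≤ ‖∏ k, ((0 : ℂ) - lam k)‖ * ‖g 0‖ := by
      rw [← norm_mul, ← hfac0]; exact h0
    have h2 : (1 : ℝ) ≤ (1 / 2) ^ M * ‖g 0‖ := by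
      calc (1 : ℝ) ≤ ‖∏ k, ((0 : ℂ) - lam k)‖ * ‖g 0‖ := h1
        _ ≤ (1 / 2) ^ M * ‖g 0‖ :=
            mul_le_mul_of_nonneg_right hprod (norm_nonneg _)
    have h3 : (2 : ℝ) ^ M * 1 ≤ (2 : ℝ) ^ M * ((1 / 2) ^ M * ‖g 0‖) :=
      mul_le_mul_of_nonneg_left h2 (by positivity)
    calc (2 : ℝ) ^ M = (2 : ℝ) ^ M * 1 := by ring
      _ ≤ (2 : ℝ) ^ M * ((1 / 2) ^ M * ‖g 0‖) := h3
      _ = ‖g 0‖ := by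
          rw [← mul_assoc, ← mul_pow]; norm_num
  have h2C : (2 : ℝ) ^ M ≤ C := le_trans hg0 (by simpa using hmax)
  have := Real.logb_le_logb_of_le (b := 2) (by norm_num) (by positivity) h2C
  calc (M : ℝ) = Real.logb 2 ((2 : ℝ) ^ M) := by
        rw [Real.logb_pow]; simp [Real.logb_self_eq_one]
    _ ≤ Real.logb 2 C := this
end

section
/- For every positive integer N and every family of real frequencies λ_1, …, λ_N ∈ ℝ (not necessarily distinct), one has ∫₀¹ |Σ_{j=1}^{N} e^{i λ_j y}|² dy ≥ N/2. -/
open MeasureTheory Complex intervalIntegral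

noncomputable section SalemAux

/-- The basic exponential `e^{i l y}`. -/
def salemE (l : ℝ) (y : ℝ) : ℂ := Complex.exp (Complex.I * l * y)

lemma salemE_cont (l : ℝ) : Continuous (salemE l) := by
  apply Complex.continuous_exp.comp
  continuity

lemma salemE_mul_conj (l y : ℝ) : salemE l y * (starRingEnd ℂ) (salemE l y) = 1 := by
  rw [Complex.mul_conj]
  norm_cast
  simp only [Complex.normSq_eq_norm_sq, salemE, Complex.norm_exp]
  simp

lemma salemE_sub (l s t : ℝ) :
    salemE l (s - t) = salemE l s * (starRingEnd ℂ) (salemE l t) := by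
  unfold salemE
  rw [← Complex.exp_conj, ← Complex.exp_add]
  congr 1
  simp only [map_mul, Complex.conj_I, Complex.conj_ofReal]
  push_cast
  ring

end SalemAux

/-- Salem's trick: for any `N ≥ 1` real frequencies,
`∫₀¹ |Σ e^{iλ_j y}|² dy ≥ N/2`. -/
theorem salem_lower_bound (N : ℕ) (hN : 0 < N) (lam : Fin N → ℝ) :
    (N : ℝ) / 2 ≤
      ∫ y in (0 : ℝ)..1,
        (‖∑ j, Complex.exp (Complex.I * (lam j : ℂ) * (y : ℂ))‖) ^ 2 := by
  classical
  set S : ℝ → ℂ := fun y => ∑ j, salemE (lam j) y with hS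
  set F : ℝ → ℝ := fun y => (‖S y‖) ^ 2 with hF
  have hgoal : (∫ y in (0:ℝ)..1,
      (‖∑ j, Complex.exp (Complex.I * (lam j : ℂ) * (y : ℂ))‖) ^ 2)
      = ∫ y in (0:ℝ)..1, F y := rfl
  rw [hgoal]
  have hScont : Continuous S := continuous_finset_sum _ fun j _ => salemE_cont _
  have hFcont : Continuous F := by
    have : Continuous fun y => ‖S y‖ := continuous_norm.comp hScont
    exact this.pow 2
  have hFnonneg : ∀ y, 0 ≤ F y := fun y => sq_nonneg _
  -- the correlation coefficients
  set b : Fin N → Fin N → ℂ :=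
    fun j k => ∫ t in (0:ℝ)..1, salemE (lam j) t * (starRingEnd ℂ) (salemE (lam k) t)
    with hb
  have hterm_cont : ∀ j k : Fin N,
      Continuous fun t => salemE (lam j) t * (starRingEnd ℂ) (salemE (lam k) t) :=
    fun j k => (salemE_cont _).mul (Complex.continuous_conj.comp (salemE_cont _))
  have hbjj : ∀ j, b j j = 1 := by
    intro j
    simp [hb, salemE_mul_conj]
  -- expansion of |S(s-t)|^2
  have hprod : ∀ s t : ℝ, S (s - t) * (starRingEnd ℂ) (S (s - t)) =
      ∑ j, ∑ k, (salemE (lam j) s * (starRingEnd ℂ) (salemE (lam k) s)) *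
        (salemE (lam k) t * (starRingEnd ℂ) (salemE (lam j) t)) := by
    intro s t
    have h1 : S (s - t) = ∑ j, salemE (lam j) s * (starRingEnd ℂ) (salemE (lam j) t) := by
      simp [hS, salemE_sub]
    rw [h1, map_sum, Finset.sum_mul_sum]
    refine Finset.sum_congr rfl fun j _ => Finset.sum_congr rfl fun k _ => ?_
    simp only [map_mul, Complex.conj_conj]
    ring
  -- inner integral identity (complex form)
  have hinner : ∀ s : ℝ,
      (∫ t in (0:ℝ)..1, S (s - t) * (starRingEnd ℂ) (S (s - t))) =
      ∑ j, ∑ k, (salemE (lam j) s * (starRingEnd ℂ) (salemE (lam k) s)) * b k j := by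
    intro s
    simp_rw [hprod s]
    rw [intervalIntegral.integral_finset_sum]
    · refine Finset.sum_congr rfl fun j _ => ?_
      rw [intervalIntegral.integral_finset_sum]
      · refine Finset.sum_congr rfl fun k _ => ?_
        rw [intervalIntegral.integral_const_mul]
      · intro k _
        exact ((continuous_const.mul (hterm_cont k j)).intervalIntegrable _ _)
    · intro j _
      apply Continuous.intervalIntegrable
      exact continuous_finset_sum _ fun k _ => continuous_const.mul (hterm_cont k j)
  -- F in terms of the complex product
  have hFrep : ∀ y, F y = (S y * (starRingEnd ℂ) (S y)).re := by
    intro y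
    rw [Complex.mul_conj]
    simp [hF, Complex.sq_norm]
  -- inner integral identity (real form)
  have hinner_re : ∀ s : ℝ,
      (∫ t in (0:ℝ)..1, F (s - t)) =
      (∑ j, ∑ k, (salemE (lam j) s * (starRingEnd ℂ) (salemE (lam k) s)) * b k j).re := by
    intro s
    rw [← hinner s]
    have hint : IntervalIntegrable (fun t => S (s - t) * (starRingEnd ℂ) (S (s - t)))
        volume 0 1 := by
      apply Continuous.intervalIntegrable
      have h1 : Continuous fun t : ℝ => S (s - t) :=
        hScont.comp (continuous_const.sub continuous_id)
      exact h1.mul (Complex.continuous_conj.comp h1)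
    have := Complex.reCLM.intervalIntegral_comp_comm hint
    simp only [Complex.reCLM_apply] at this
    rw [← this]
    congr 1
    funext t
    exact hFrep (s - t)
  -- outer integral of the sum
  set Φ : ℝ → ℝ := fun s =>
    (∑ j, ∑ k, (salemE (lam j) s * (starRingEnd ℂ) (salemE (lam k) s)) * b k j).re with hΦ
  have hΦsum_cont : Continuous fun s =>
      ∑ j, ∑ k, (salemE (lam j) s * (starRingEnd ℂ) (salemE (lam k) s)) * b k j :=
    continuous_finset_sum _ fun j _ =>
      continuous_finset_sum _ fun k _ => (hterm_cont j k).mul continuous_const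
  have hΦcont : Continuous Φ := Complex.continuous_re.comp hΦsum_cont
  have houter : (∫ s in (0:ℝ)..1, Φ s) = ∑ j, ∑ k, Complex.normSq (b j k) := by
    have hC : (∫ s in (0:ℝ)..1,
        ∑ j, ∑ k, (salemE (lam j) s * (starRingEnd ℂ) (salemE (lam k) s)) * b k j) =
        ∑ j, ∑ k, b j k * b k j := by
      rw [intervalIntegral.integral_finset_sum]
      · refine Finset.sum_congr rfl fun j _ => ?_
        rw [intervalIntegral.integral_finset_sum]
        · refine Finset.sum_congr rfl fun k _ => ?_
          rw [intervalIntegral.integral_mul_const]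
        · intro k _
          exact (((hterm_cont j k).mul continuous_const).intervalIntegrable _ _)
      · intro j _
        exact ((continuous_finset_sum _ fun k _ =>
          (hterm_cont j k).mul continuous_const).intervalIntegrable _ _)
    have hswap : ∀ j k : Fin N, b k j = (starRingEnd ℂ) (b j k) := by
      intro j k
      show (∫ t in (0:ℝ)..1, salemE (lam k) t * (starRingEnd ℂ) (salemE (lam j) t))
          = (starRingEnd ℂ)
            (∫ t in (0:ℝ)..1, salemE (lam j) t * (starRingEnd ℂ) (salemE (lam k) t))
      rw [intervalIntegral.integral_of_le (by norm_num : (0:ℝ) ≤ 1),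
        intervalIntegral.integral_of_le (by norm_num : (0:ℝ) ≤ 1), ← integral_conj]
      congr 1
      funext t
      simp only [map_mul, Complex.conj_conj]
      ring
    have hint2 : IntervalIntegrable (fun s =>
        ∑ j, ∑ k, (salemE (lam j) s * (starRingEnd ℂ) (salemE (lam k) s)) * b k j)
        volume 0 1 := hΦsum_cont.intervalIntegrable _ _
    have hre := Complex.reCLM.intervalIntegral_comp_comm hint2
    simp only [Complex.reCLM_apply] at hre
    calc (∫ s in (0:ℝ)..1, Φ s)
        = (∫ s in (0:ℝ)..1,
            ∑ j, ∑ k, (salemE (lam j) s * (starRingEnd ℂ) (salemE (lam k) s)) * b k j).re := hre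
      _ = (∑ j, ∑ k, b j k * b k j).re := by rw [hC]
      _ = ∑ j, ∑ k, Complex.normSq (b j k) := by
          rw [Complex.re_sum]
          refine Finset.sum_congr rfl fun j _ => ?_
          rw [Complex.re_sum]
          refine Finset.sum_congr rfl fun k _ => ?_
          rw [hswap j k, Complex.mul_conj]
          simp
  -- lower bound N ≤ ∑∑ normSq (b j k)
  have hlow : (N : ℝ) ≤ ∑ j, ∑ k, Complex.normSq (b j k) := by
    have h1 : ∀ j : Fin N, (1 : ℝ) ≤ ∑ k, Complex.normSq (b j k) := by
      intro j
      have h2 := Finset.single_le_sum (f := fun k => Complex.normSq (b j k))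
        (fun k _ => Complex.normSq_nonneg _) (Finset.mem_univ j)
      rwa [hbjj j, Complex.normSq_one] at h2
    calc (N : ℝ) = ∑ _j : Fin N, (1 : ℝ) := by simp
      _ ≤ ∑ j, ∑ k, Complex.normSq (b j k) := Finset.sum_le_sum fun j _ => h1 j
  -- F is even
  have hFeven : ∀ y, F (-y) = F y := by
    intro y
    have hSneg : S (-y) = (starRingEnd ℂ) (S y) := by
      simp only [hS]
      rw [map_sum]
      refine Finset.sum_congr rfl fun j _ => ?_
      have h3 := salemE_sub (lam j) 0 y
      rw [zero_sub] at h3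
      rw [h3]
      simp [salemE]
    simp [hF, hSneg]
  have hFint : ∀ a c : ℝ, IntervalIntegrable F volume a c :=
    fun a c => hFcont.intervalIntegrable _ _
  -- the pointwise bound on the inner integral, for s ∈ [0,1]
  have hptwise : ∀ s ∈ Set.Icc (0:ℝ) 1,
      (∫ t in (0:ℝ)..1, F (s - t)) ≤ 2 * ∫ y in (0:ℝ)..1, F y := by
    intro s hs
    obtain ⟨hs0, hs1⟩ := hs
    have hcs : (∫ t in (0:ℝ)..1, F (s - t)) = ∫ u in (s-1)..(s-0), F u :=
      intervalIntegral.integral_comp_sub_left F s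
    rw [hcs, sub_zero]
    have hsplit : (∫ u in (s-1:ℝ)..s, F u) =
        (∫ u in (s-1:ℝ)..0, F u) + ∫ u in (0:ℝ)..s, F u :=
      (intervalIntegral.integral_add_adjacent_intervals (hFint _ _) (hFint _ _)).symm
    rw [hsplit]
    have hneg : (∫ u in (s-1:ℝ)..0, F u) = ∫ u in (0:ℝ)..(1-s), F u := by
      have h1 : (∫ u in (s-1:ℝ)..0, F u) = ∫ u in (s-1:ℝ)..0, F (-u) := by
        congr 1; funext u; rw [hFeven]
      rw [h1, intervalIntegral.integral_comp_neg F]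
      norm_num
    rw [hneg]
    have hle : ∀ c : ℝ, 0 ≤ c → c ≤ 1 →
        (∫ u in (0:ℝ)..c, F u) ≤ ∫ u in (0:ℝ)..1, F u := by
      intro c hc0 hc1
      have h2 : (∫ u in (0:ℝ)..1, F u) =
          (∫ u in (0:ℝ)..c, F u) + ∫ u in c..(1:ℝ), F u :=
        (intervalIntegral.integral_add_adjacent_intervals (hFint _ _) (hFint _ _)).symm
      have h3 : 0 ≤ ∫ u in c..(1:ℝ), F u :=
        intervalIntegral.integral_nonneg hc1 (fun u _ => hFnonneg u)
      linarith
    have hA := hle (1 - s) (by linarith) (by linarith)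
    have hB := hle s hs0 hs1
    linarith
  -- put everything together
  have hineq : (N : ℝ) ≤ 2 * ∫ y in (0:ℝ)..1, F y := by
    have hΦeq : ∀ s : ℝ, Φ s = ∫ t in (0:ℝ)..1, F (s - t) := fun s => (hinner_re s).symm
    have hmono : (∫ s in (0:ℝ)..1, Φ s) ≤ ∫ s in (0:ℝ)..1, (2 * ∫ y in (0:ℝ)..1, F y) := by
      apply intervalIntegral.integral_mono_on (by norm_num)
        (hΦcont.intervalIntegrable _ _) (intervalIntegrable_const)
      intro s hs
      rw [hΦeq s]
      exact hptwise s hs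
    rw [intervalIntegral.integral_const] at hmono
    simp only [smul_eq_mul, sub_zero, one_mul] at hmono
    calc (N : ℝ) ≤ ∑ j, ∑ k, Complex.normSq (b j k) := hlow
      _ = ∫ s in (0:ℝ)..1, Φ s := houter.symm
      _ ≤ 2 * ∫ y in (0:ℝ)..1, F y := hmono
  linarith
end

section
/- For all natural numbers a ≤ b, ∫₀^{2π} ∏_{k=a}^{b} (7 + 2 cos(3^k v))/9 dv = 2π · (7/9)^{b−a+1}. -/
open MeasureTheory Real

noncomputable def rieszP (n : ℕ) (v : ℝ) : ℝ :=
  ∏ j ∈ Finset.range (n + 1), (7 + 2 * Real.cos ((3 : ℝ) ^ j * v)) / 9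

lemma rieszP_cont (n : ℕ) : Continuous (rieszP n) := by
  unfold rieszP
  exact continuous_finset_prod _ fun j _ => by continuity

lemma rieszP_periodic (n : ℕ) : Function.Periodic (rieszP n) (2 * Real.pi) := by
  intro v
  unfold rieszP
  refine Finset.prod_congr rfl fun j _ => ?_
  have : (3 : ℝ) ^ j * (v + 2 * Real.pi) = 3 ^ j * v + (3 ^ j : ℤ) * (2 * Real.pi) := by
    push_cast; ring
  rw [this, Real.cos_add_int_mul_two_pi]

lemma cos_triple (x : ℝ) :
    Real.cos (x / 3) + Real.cos ((x + 2 * Real.pi) / 3) + Real.cos ((x + 4 * Real.pi) / 3) = 0 := by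
  have h1 : (x + 2 * Real.pi) / 3 = x / 3 + (Real.pi - Real.pi / 3) := by ring
  have h2 : (x + 4 * Real.pi) / 3 = x / 3 + (Real.pi + Real.pi / 3) := by ring
  rw [h1, h2, Real.cos_add, Real.cos_add, Real.cos_pi_sub, Real.sin_pi_sub,
    Real.cos_add, Real.sin_add, Real.cos_pi, Real.sin_pi, Real.cos_pi_div_three,
    Real.sin_pi_div_three]
  ring

lemma rieszP_integral (n : ℕ) :
    ∫ v in (0 : ℝ)..(2 * Real.pi), rieszP n v = 2 * Real.pi * (7 / 9) ^ (n + 1) := by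
  induction n with
  | zero =>
      have e : ∀ v : ℝ, rieszP 0 v = (7 + 2 * Real.cos v) / 9 := fun v => by
        simp [rieszP]
      simp_rw [e]
      have : ∫ v in (0:ℝ)..(2*Real.pi), (7 + 2 * Real.cos v) / 9
          = (∫ _v in (0:ℝ)..(2*Real.pi), (7:ℝ)/9)
            + ∫ v in (0:ℝ)..(2*Real.pi), (2/9) * Real.cos v := by
        rw [← intervalIntegral.integral_add intervalIntegrable_const
          ((show Continuous fun v : ℝ => (2/9:ℝ) * Real.cos v from
            continuous_const.mul Real.continuous_cos).intervalIntegrable _ _)]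
        exact intervalIntegral.integral_congr fun v _ => by ring
      rw [this, intervalIntegral.integral_const, intervalIntegral.integral_const_mul,
        integral_cos]
      simp
      try ring
  | succ n ih =>
      set F : ℝ → ℝ := fun u => rieszP n u * ((7 + 2 * Real.cos (u / 3)) / 9) with hF
      have hFc : Continuous F := (rieszP_cont n).mul (by continuity)
      have step1 : ∀ v : ℝ, rieszP (n + 1) v = F (3 * v) := by
        intro v
        simp only [hF]
        rw [show (3:ℝ) * v / 3 = v by ring]
        unfold rieszP
        rw [Finset.prod_range_succ']
        congr 1
        · refine Finset.prod_congr rfl fun j _ => ?_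
          rw [show (3:ℝ) ^ (j+1) * v = 3 ^ j * (3 * v) by ring]
        · norm_num
      have subst : ∫ v in (0:ℝ)..(2 * Real.pi), rieszP (n+1) v
          = (3:ℝ)⁻¹ • ∫ u in (0:ℝ)..(6 * Real.pi), F u := by
        simp_rw [step1]
        rw [intervalIntegral.integral_comp_mul_left F (by norm_num : (3:ℝ) ≠ 0), mul_zero,
          show (3:ℝ) * (2 * Real.pi) = 6 * Real.pi by ring]
      have hInt : ∀ t₁ t₂ : ℝ, IntervalIntegrable F volume t₁ t₂ := fun t₁ t₂ =>
        hFc.intervalIntegrable t₁ t₂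
      have split : ∫ u in (0:ℝ)..(6 * Real.pi), F u
          = (∫ u in (0:ℝ)..(2 * Real.pi), F u) + (∫ u in (2*Real.pi)..(4 * Real.pi), F u)
            + (∫ u in (4*Real.pi)..(6 * Real.pi), F u) := by
        rw [intervalIntegral.integral_add_adjacent_intervals (hInt 0 (2*Real.pi)) (hInt _ _),
          intervalIntegral.integral_add_adjacent_intervals (hInt 0 (4*Real.pi)) (hInt _ _)]
      have shift2 : (∫ u in (2*Real.pi)..(4 * Real.pi), F u)
          = ∫ u in (0:ℝ)..(2 * Real.pi),
              rieszP n u * ((7 + 2 * Real.cos ((u + 2*Real.pi) / 3)) / 9) := by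
        have e : ∀ u : ℝ, rieszP n u * ((7 + 2 * Real.cos ((u + 2*Real.pi) / 3)) / 9)
            = F (u + 2*Real.pi) := by
          intro u; simp only [hF]; rw [rieszP_periodic n u]
        simp_rw [e]
        rw [intervalIntegral.integral_comp_add_right F (2*Real.pi), zero_add,
          show (2*Real.pi : ℝ) + 2*Real.pi = 4*Real.pi by ring]
      have shift4 : (∫ u in (4*Real.pi)..(6 * Real.pi), F u)
          = ∫ u in (0:ℝ)..(2 * Real.pi),
              rieszP n u * ((7 + 2 * Real.cos ((u + 4*Real.pi) / 3)) / 9) := by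
        have e : ∀ u : ℝ, rieszP n u * ((7 + 2 * Real.cos ((u + 4*Real.pi) / 3)) / 9)
            = F (u + 4*Real.pi) := by
          intro u; simp only [hF]
          have h : u + 4*Real.pi = (u + 2*Real.pi) + 2*Real.pi := by ring
          rw [h, rieszP_periodic n, rieszP_periodic n u]
        simp_rw [e]
        rw [intervalIntegral.integral_comp_add_right F (4*Real.pi), zero_add,
          show (2*Real.pi : ℝ) + 4*Real.pi = 6*Real.pi by ring]
      have i1 : IntervalIntegrable
          (fun u => rieszP n u * ((7 + 2 * Real.cos (u / 3)) / 9)) volume 0 (2*Real.pi) :=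
        ((rieszP_cont n).mul (by fun_prop)).intervalIntegrable _ _
      have i2 : IntervalIntegrable
          (fun u => rieszP n u * ((7 + 2 * Real.cos ((u + 2*Real.pi) / 3)) / 9))
          volume 0 (2*Real.pi) :=
        ((rieszP_cont n).mul (by fun_prop)).intervalIntegrable _ _
      have i3 : IntervalIntegrable
          (fun u => rieszP n u * ((7 + 2 * Real.cos ((u + 4*Real.pi) / 3)) / 9))
          volume 0 (2*Real.pi) :=
        ((rieszP_cont n).mul (by fun_prop)).intervalIntegrable _ _
      have combine : ∫ u in (0:ℝ)..(6 * Real.pi), F u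
          = ∫ u in (0:ℝ)..(2 * Real.pi), (7/3) * rieszP n u := by
        rw [split, shift2, shift4]
        simp only [hF]
        rw [← intervalIntegral.integral_add i1 i2,
          ← intervalIntegral.integral_add (i1.add i2) i3]
        refine intervalIntegral.integral_congr fun u _ => ?_
        have h3 := cos_triple u
        linear_combination (rieszP n u * (2/9)) * h3
      rw [subst, combine, intervalIntegral.integral_const_mul, ih, smul_eq_mul]
      ring

/-- The Riesz-type product with lacunary frequencies `3^a, …, 3^b` integrates over
`[0, 2π]` to `2π·(7/9)^{b−a+1}`. -/
theorem riesz_product_integral (a b : ℕ) (hab : a ≤ b) :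
    ∫ v in (0 : ℝ)..(2 * Real.pi),
        ∏ k ∈ Finset.Icc a b, (7 + 2 * Real.cos ((3 : ℝ) ^ k * v)) / 9
      = 2 * Real.pi * (7 / 9) ^ (b - a + 1) := by
  set n := b - a with hn
  have hb : b + 1 - a = n + 1 := by omega
  have step : ∀ v : ℝ, (∏ k ∈ Finset.Icc a b, (7 + 2 * Real.cos ((3 : ℝ) ^ k * v)) / 9)
      = rieszP n ((3:ℝ) ^ a * v) := by
    intro v
    rw [← Finset.Ico_add_one_right_eq_Icc, Finset.prod_Ico_eq_prod_range, hb]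
    unfold rieszP
    refine Finset.prod_congr rfl fun j _ => ?_
    rw [show (3:ℝ) ^ (a + j) * v = 3 ^ j * (3 ^ a * v) by rw [pow_add]; ring]
  simp_rw [step]
  rw [intervalIntegral.integral_comp_mul_left (rieszP n) (by positivity : (3:ℝ)^a ≠ 0),
    mul_zero]
  have key : ∫ u in (0:ℝ)..((3:ℝ)^a * (2 * Real.pi)), rieszP n u
      = ((3:ℝ)^a) * ∫ u in (0:ℝ)..(2*Real.pi), rieszP n u := by
    have h := (rieszP_periodic n).intervalIntegral_add_zsmul_eq ((3:ℕ)^a : ℤ) 0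
      (fun t₁ t₂ => (rieszP_cont n).intervalIntegrable t₁ t₂)
    rw [zero_add, zero_add, zsmul_eq_mul, zsmul_eq_mul] at h
    push_cast at h
    exact h
  rw [key, rieszP_integral n, smul_eq_mul, ← mul_assoc,
    inv_mul_cancel₀ (by positivity : ((3:ℝ)^a) ≠ 0), one_mul]
end

section
/- There is an absolute constant A > 0 with the following property: if f is holomorphic on an open neighborhood of the closed unit disc, |f(z)| ≤ L for |z| ≤ 1, and there exists a point a with |a| ≤ 2/3 and |f(a)| ≥ δ, where 0 < δ ≤ L, then the number of zeros of f in the closed disc {|z| ≤ 2/3}, counted with multiplicity, is at most A·(1 + log(L/δ)). -/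
open Metric

lemma normSq_identity (a l : ℂ) :
    Complex.normSq (1 - (starRingEnd ℂ) l * a) - Complex.normSq (a - l)
      = (1 - Complex.normSq a) * (1 - Complex.normSq l) := by
  simp [Complex.normSq_apply, Complex.sub_re, Complex.sub_im, Complex.mul_re, Complex.mul_im,
    Complex.conj_re, Complex.conj_im]
  ring

lemma factor_bound (a l : ℂ) (ha : ‖a‖ ≤ 2/3) (hl : ‖l‖ ≤ 2/3) :
    ‖a - l‖ ≤ 12/13 * ‖1 - (starRingEnd ℂ) l * a‖ := by
  have h1 : Complex.normSq a ≤ 4/9 := by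
    rw [← Complex.sq_norm]; nlinarith [norm_nonneg a]
  have h2 : Complex.normSq l ≤ 4/9 := by
    rw [← Complex.sq_norm]; nlinarith [norm_nonneg l]
  have hN : Complex.normSq (1 - (starRingEnd ℂ) l * a) ≤ 169/81 := by
    rw [← Complex.sq_norm]
    have h3 : ‖1 - (starRingEnd ℂ) l * a‖ ≤ 13/9 := by
      have := norm_sub_le (1 : ℂ) ((starRingEnd ℂ) l * a)
      simp only [norm_mul, Complex.norm_conj, norm_one] at this
      nlinarith [norm_nonneg a, norm_nonneg l]
    nlinarith [norm_nonneg (1 - (starRingEnd ℂ) l * a)]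
  have key : Complex.normSq (a - l) ≤ 144/169 * Complex.normSq (1 - (starRingEnd ℂ) l * a) := by
    nlinarith [normSq_identity a l, Complex.normSq_nonneg (1 - (starRingEnd ℂ) l * a)]
  have hsq : ‖a - l‖ ^ 2 ≤ (12/13 * ‖1 - (starRingEnd ℂ) l * a‖) ^ 2 := by
    rw [mul_pow, Complex.sq_norm, Complex.sq_norm]; nlinarith
  exact le_of_pow_le_pow_left₀ two_ne_zero (by positivity) hsq

lemma sphere_identity (z l : ℂ) (hz : ‖z‖ = 1) :
    ‖1 - (starRingEnd ℂ) l * z‖ = ‖z - l‖ := by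
  have h : 1 - (starRingEnd ℂ) l * z = z * (starRingEnd ℂ) (z - l) := by
    rw [map_sub, mul_sub, Complex.mul_conj]
    simp [Complex.normSq_eq_norm_sq, hz]
    ring
  rw [h, norm_mul, Complex.norm_conj, hz, one_mul]

/-- Jensen-type zero count: there is an absolute constant `A > 0` such that if `f` is
holomorphic on a neighborhood of the closed unit disc, `|f| ≤ L` on the disc, and
`|f(a)| ≥ δ` at some point `a` with `|a| ≤ 2/3` (`0 < δ ≤ L`), then the number of
zeros of `f` in the closed disc of radius `2/3`, counted with multiplicity (encoded by
the factorization `f(z) = ∏ (z − λ_k) · g(z)` with `g` nonvanishing on that disc), is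
at most `A·(1 + log(L/δ))`. -/
theorem jensen_zero_count :
    ∃ A > (0 : ℝ), ∀ (f g : ℂ → ℂ) (U : Set ℂ), IsOpen U →
      closedBall (0 : ℂ) 1 ⊆ U → DifferentiableOn ℂ f U →
      ∀ L δ : ℝ, 0 < δ → δ ≤ L →
      (∀ z ∈ closedBall (0 : ℂ) 1, ‖f z‖ ≤ L) →
      (∃ a : ℂ, ‖a‖ ≤ 2 / 3 ∧ δ ≤ ‖f a‖) →
      ∀ (M : ℕ) (lam : Fin M → ℂ), (∀ k, lam k ∈ closedBall (0 : ℂ) (2 / 3)) →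
        DifferentiableOn ℂ g U →
        (∀ z ∈ closedBall (0 : ℂ) (2 / 3), g z ≠ 0) →
        (∀ z ∈ U, f z = (∏ k, (z - lam k)) * g z) →
        (M : ℝ) ≤ A * (1 + Real.log (L / δ)) := by
  have hlog : 0 < Real.log (13/12) := Real.log_pos (by norm_num)
  refine ⟨(Real.log (13/12))⁻¹, inv_pos.mpr hlog, ?_⟩
  intro f g U hU hsub hf L δ hδ hδL hbound ⟨a, ha, hfa⟩ M lam hlam hg hgne hfac
  -- auxiliary function h
  set h : ℂ → ℂ := fun z => g z * ∏ k, (1 - (starRingEnd ℂ) (lam k) * z) with hh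
  have hhd : DifferentiableOn ℂ h U := by
    apply hg.mul
    apply DifferentiableOn.fun_finsetProd
    intro k _
    exact (differentiable_const _ |>.sub ((differentiable_const _).mul differentiable_id)).differentiableOn
  -- max modulus bound for h on closed ball 1
  have hmem : a ∈ closedBall (0 : ℂ) 1 := by
    simp only [mem_closedBall, Complex.dist_eq, sub_zero]
    exact ha.trans (by norm_num)
  have hha : ‖h a‖ ≤ L := by
    have hcl : closure (ball (0 : ℂ) 1) = closedBall 0 1 := closure_ball 0 one_ne_zero
    have hfr : frontier (ball (0 : ℂ) 1) = sphere 0 1 := frontier_ball 0 one_ne_zero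
    have hdc : DiffContOnCl ℂ h (ball 0 1) := by
      apply DifferentiableOn.diffContOnCl
      rw [hcl]
      exact hhd.mono hsub
    have := Complex.norm_le_of_forall_mem_frontier_norm_le isBounded_ball hdc
      (C := L) ?_ (z := a) (by rw [hcl]; exact hmem)
    · exact this
    · intro z hz
      rw [hfr] at hz
      simp only [mem_sphere_iff_norm, sub_zero] at hz
      have hz1 : z ∈ closedBall (0 : ℂ) 1 := by
        simp [Complex.dist_eq, hz]
      have : ‖h z‖ = ‖f z‖ := by
        rw [hfac z (hsub hz1), hh]
        simp only [norm_mul, norm_prod]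
        rw [mul_comm]
        congr 1
        exact Finset.prod_congr rfl fun k _ => sphere_identity z (lam k) hz
      rw [this]
      exact hbound z hz1
  -- bound δ ≤ (12/13)^M * L
  have hstep : δ ≤ (12/13 : ℝ) ^ M * L := by
    have hfa2 : ‖f a‖ = (∏ k, ‖a - lam k‖) * ‖g a‖ := by
      rw [hfac a (hsub hmem), norm_mul, norm_prod]
    have hprod : (∏ k, ‖a - lam k‖) * ‖g a‖
        ≤ (12/13 : ℝ) ^ M * ‖h a‖ := by
      rw [hh]
      simp only [norm_mul, norm_prod]
      rw [mul_comm (‖g a‖), ← mul_assoc]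
      apply mul_le_mul_of_nonneg_right _ (norm_nonneg _)
      rw [show ((12:ℝ)/13) ^ M = ∏ _k : Fin M, ((12:ℝ)/13) by simp [div_pow], ← Finset.prod_mul_distrib]
      apply Finset.prod_le_prod (fun k _ => norm_nonneg _)
      intro k _
      have hk : ‖lam k‖ ≤ 2/3 := by simpa [Complex.dist_eq] using hlam k
      exact factor_bound a (lam k) ha hk
    calc δ ≤ ‖f a‖ := hfa
      _ = _ := hfa2
      _ ≤ (12/13 : ℝ) ^ M * ‖h a‖ := hprod
      _ ≤ (12/13 : ℝ) ^ M * L := by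
          apply mul_le_mul_of_nonneg_left hha (by positivity)
  -- conclude
  have hL : 0 < L := hδ.trans_le hδL
  have hlog2 : (M : ℝ) * Real.log (13/12) ≤ Real.log (L / δ) := by
    have h1 : (13/12 : ℝ) ^ M ≤ L / δ := by
      rw [le_div_iff₀ hδ]
      have hpow : (13/12 : ℝ) ^ M * (12/13 : ℝ) ^ M = 1 := by
        rw [← mul_pow]; norm_num
      calc (13/12 : ℝ) ^ M * δ ≤ (13/12 : ℝ) ^ M * ((12/13 : ℝ) ^ M * L) :=
            mul_le_mul_of_nonneg_left hstep (by positivity)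
        _ = L := by rw [← mul_assoc, hpow, one_mul]
    have h2 := Real.log_le_log (x := (13/12:ℝ)^M) (by positivity) h1
    rwa [Real.log_pow] at h2
  have hlognn : 0 ≤ Real.log (L / δ) := Real.log_nonneg ((one_le_div hδ).mpr hδL)
  calc (M : ℝ) ≤ Real.log (L / δ) / Real.log (13/12) := by
        rw [le_div_iff₀ hlog]; exact hlog2
    _ = (Real.log (13/12))⁻¹ * Real.log (L / δ) := by rw [div_eq_inv_mul]
    _ ≤ (Real.log (13/12))⁻¹ * (1 + Real.log (L / δ)) := by
        apply mul_le_mul_of_nonneg_left _ (le_of_lt (inv_pos.mpr hlog))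
        linarith
end
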